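/- arXiv:1101.5767 — 2 statements merged into one kernel-verified Lean document; each statement's English description precedes it below -/
import Mathlib

section
/- Let 0 ≤ s ≤ g−2 and let w_0, …, w_s ∈ H be pairwise ω-orthogonal vectors, each with a_1-coordinate equal to 1, with gcd(w_0,…,w_s) = 1. Then there exist vectors x_1, …, x_{g−1−s} ∈ H such that: each x_j has a_1-coordinate equal to 1 and b_1-coordinate equal to the b_1-coordinate of w_0; each pr₂(x_j) is a primitive vector of H₂; the combined family (w_0, …, w_s, x_1, …, x_{g−1−s}) is pairwise ω-orthogonal with gcd(w_0,…,w_s,x_1,…,x_{g−1−s}) = 1; and moreover, for every subfamily (w_{i_0},…,w_{i_r}) of (w_0,…,w_s) such that gcd(pr₂(w_{i_0}),…,pr₂(w_{i_r})) = 1, one also has gcd(pr₂(w_{i_0}),…,pr₂(w_{i_r}),pr₂(x_1),…,pr₂(x_{g−1−s})) = 1. -/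
/-!
The heart of the proof is a symplectic frame `(z_k, y_k)` of `g - 1 - s` hyperbolic pairs in `H₂`
(both families isotropic, `ω(z_k, y_l) = δ_kl`), orthogonal to every `w_i`. Then `x_k = w_0 + y_k`
works: the functionals `ω(z_k, ·)` only see the `H₂`-part of a vector, so they vanish on the `w_i`
and the `pr₂ w_i` and are dual to the `x_k` and to the `pr₂ x_k`; functionals of this kind extend
any unimodular family of `w`'s, or of their projections, by the `x`'s.

The frame is grown one pair at a time from `(a_1, b_1)`, which keeps the new pairs inside `H₂`.
Let `K ⊆ ℤ^{2N}` be orthogonal to `m` vectors and to a symplectic frame of `n` pairs, `m + n < N`.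
If a prime `q` divided every value of `ω` on `K`, then modulo `q` a basis of the saturated
lattice `K` (of rank at least `2N - m - 2n`), together with the first halves of the frame, would
be an independent isotropic family of more than `N` vectors. So the values of `ω` on `K` have no
common prime factor, and then its least positive value is `1` by Euclid's algorithm.
-/

namespace Paper

/-- The standard symplectic form on `R^{2g}` with respect to the basis
`a_1, b_1, …, a_g, b_g` (coordinates `2i, 2i+1` for `a_{i+1}, b_{i+1}`). -/
def symp {R : Type*} [CommRing R] {g : ℕ} (x y : Fin (2 * g) → R) : R :=
  ∑ i : Fin g,
    (x ⟨2 * i.1, by omega⟩ * y ⟨2 * i.1 + 1, by omega⟩ -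
      x ⟨2 * i.1 + 1, by omega⟩ * y ⟨2 * i.1, by omega⟩)

theorem symp_add_left {R : Type*} [CommRing R] {g : ℕ} (x y a : Fin (2 * g) → R) :
    symp (x + y) a = symp x a + symp y a := by
  unfold symp
  rw [← Finset.sum_add_distrib]
  exact Finset.sum_congr rfl fun i _ => by simp only [Pi.add_apply]; ring

theorem symp_smul_left {R : Type*} [CommRing R] {g : ℕ} (c : R) (x a : Fin (2 * g) → R) :
    symp (c • x) a = c * symp x a := by
  unfold symp
  rw [Finset.mul_sum]
  exact Finset.sum_congr rfl fun i _ => by simp only [Pi.smul_apply, smul_eq_mul]; ring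

theorem symp_zero_left {R : Type*} [CommRing R] {g : ℕ} (a : Fin (2 * g) → R) :
    symp (0 : Fin (2 * g) → R) a = 0 := by
  unfold symp; simp

/-- The orthogonal complement `A^⊥ = {x | ω(x,a) = 0 for all a ∈ A}`. -/
def perp {R : Type*} [CommRing R] {g : ℕ} (A : Set (Fin (2 * g) → R)) :
    Submodule R (Fin (2 * g) → R) where
  carrier := {x | ∀ a ∈ A, symp x a = 0}
  add_mem' := by
    intro x y hx hy a ha
    rw [symp_add_left, hx a ha, hy a ha, add_zero]
  zero_mem' := by
    intro a ha
    exact symp_zero_left a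
  smul_mem' := by
    intro c x hx a ha
    rw [symp_smul_left, hx a ha, mul_zero]

/-- The submodule of vectors whose first `m` coordinates vanish.
`H_k = coordZero R (2*g) (2*(k-1))`, and `H₂ = coordZero R (2*(g+1)) 2`. -/
def coordZero (R : Type*) [CommRing R] (n m : ℕ) : Submodule R (Fin n → R) where
  carrier := {v | ∀ j : Fin n, (j : ℕ) < m → v j = 0}
  add_mem' := by
    intro x y hx hy j hj
    have h1 := hx j hj
    have h2 := hy j hj
    simp [Pi.add_apply, h1, h2]
  zero_mem' := by intro j hj; rfl
  smul_mem' := by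
    intro c x hx j hj
    have h1 := hx j hj
    simp [Pi.smul_apply, h1]

/-- The standard basis vector `a_{i+1}` (`i` is 0-indexed). -/
def stdA (R : Type*) [CommRing R] (g i : ℕ) : Fin (2 * g) → R :=
  fun j => if (j : ℕ) = 2 * i then 1 else 0

/-- The standard basis vector `b_{i+1}` (`i` is 0-indexed). -/
def stdB (R : Type*) [CommRing R] (g i : ℕ) : Fin (2 * g) → R :=
  fun j => if (j : ℕ) = 2 * i + 1 then 1 else 0

/-- Regard an integer vector as a rational vector. -/
def qcast {n : ℕ} (v : Fin n → ℤ) : Fin n → ℚ := fun j => (v j : ℚ)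

/-- The projection `pr₂` deleting the `a_1`- and `b_1`-coordinates. -/
def pr2 {R : Type*} [CommRing R] {n : ℕ} (v : Fin n → R) : Fin n → R :=
  fun j => if (j : ℕ) < 2 then 0 else v j

/-- `gcd(v_1, …, v_m) = 1`: the vectors are linearly independent and their
ℤ-span is a direct summand. -/
def IsUnimodular {n m : ℕ} (v : Fin m → Fin n → ℤ) : Prop :=
  LinearIndependent ℤ v ∧
    ∃ C : Submodule ℤ (Fin n → ℤ), IsCompl (Submodule.span ℤ (Set.range v)) C

/-- A primitive vector. -/
def Primitive {n : ℕ} (v : Fin n → ℤ) : Prop := IsUnimodular ![v]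

/-- The entries of `w` are pairwise `ω`-orthogonal. -/
def PairwiseOrth {g m : ℕ} (w : Fin m → Fin (2 * g) → ℤ) : Prop :=
  ∀ i j, i ≠ j → symp (w i) (w j) = 0

/-- `Λ³ W`: the span of all wedges of three vectors from `W` inside the
exterior algebra. -/
def wedge3 {g : ℕ} (W : Submodule ℚ (Fin (2 * g) → ℚ)) :
    Submodule ℚ (ExteriorAlgebra ℚ (Fin (2 * g) → ℚ)) :=
  Submodule.span ℚ {x | ∃ z₁ ∈ W, ∃ z₂ ∈ W, ∃ z₃ ∈ W,
    x = ExteriorAlgebra.ι ℚ z₁ * ExteriorAlgebra.ι ℚ z₂ * ExteriorAlgebra.ι ℚ z₃}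

/-- `u ∧ Λ² W`. -/
def uWedge2 {g : ℕ} (u : Fin (2 * g) → ℚ) (W : Submodule ℚ (Fin (2 * g) → ℚ)) :
    Submodule ℚ (ExteriorAlgebra ℚ (Fin (2 * g) → ℚ)) :=
  Submodule.span ℚ {x | ∃ z₁ ∈ W, ∃ z₂ ∈ W,
    x = ExteriorAlgebra.ι ℚ u * ExteriorAlgebra.ι ℚ z₁ * ExteriorAlgebra.ι ℚ z₂}

/-- `u ∧ u' ∧ W`. -/
def uuWedge1 {g : ℕ} (u u' : Fin (2 * g) → ℚ) (W : Submodule ℚ (Fin (2 * g) → ℚ)) :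
    Submodule ℚ (ExteriorAlgebra ℚ (Fin (2 * g) → ℚ)) :=
  Submodule.span ℚ {x | ∃ z ∈ W,
    x = ExteriorAlgebra.ι ℚ u * ExteriorAlgebra.ι ℚ u' * ExteriorAlgebra.ι ℚ z}

/-- The simplicial differential: on the summand indexed by `w` it sends `z` to
`Σ_j (-1)^j · z` placed in the summand indexed by `∂_j w`. -/
noncomputable def diff (g p : ℕ)
    (ξ : (Fin (p + 1) → Fin (2 * g) → ℤ) →₀ ExteriorAlgebra ℚ (Fin (2 * g) → ℚ)) :
    (Fin p → Fin (2 * g) → ℤ) →₀ ExteriorAlgebra ℚ (Fin (2 * g) → ℚ) :=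
  ξ.sum fun w z =>
    ∑ j : Fin (p + 1), ((-1 : ℚ) ^ (j : ℕ)) • Finsupp.single (fun i => w (j.succAbove i)) z

/-- The gcd of the determinants of all maximal square submatrices of the matrix
whose columns are the `v i`. -/
def vgcd {ι : Type*} [Fintype ι] {m : ℕ} (v : Fin m → ι → ℤ) : ℕ :=
  Finset.univ.gcd fun r : Fin m → ι => (Matrix.det (Matrix.of fun i j => v j (r i))).natAbs

section Symp

variable {R : Type*} [CommRing R] {g : ℕ}

theorem symp_add_right (x y z : Fin (2 * g) → R) : symp x (y + z) = symp x y + symp x z := by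
  simp only [symp, ← Finset.sum_add_distrib, Pi.add_apply]
  exact Finset.sum_congr rfl fun _ _ => by ring

theorem symp_smul_right (c : R) (x y : Fin (2 * g) → R) : symp x (c • y) = c * symp x y := by
  simp only [symp, Finset.mul_sum, Pi.smul_apply, smul_eq_mul]
  exact Finset.sum_congr rfl fun _ _ => by ring

def sympForm : LinearMap.BilinForm R (Fin (2 * g) → R) :=
  LinearMap.mk₂ R symp symp_add_left symp_smul_left symp_add_right symp_smul_right

@[simp] theorem sympForm_apply (x y : Fin (2 * g) → R) : sympForm x y = symp x y := rfl

theorem symp_anticomm (x y : Fin (2 * g) → R) : symp y x = -symp x y := by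
  simp only [symp, ← Finset.sum_neg_distrib]
  exact Finset.sum_congr rfl fun _ _ => by ring

theorem symp_eq_zero_comm {x y : Fin (2 * g) → R} : symp x y = 0 ↔ symp y x = 0 := by
  rw [symp_anticomm x y, neg_eq_zero]

theorem symp_self (x : Fin (2 * g) → R) : symp x x = 0 :=
  Finset.sum_eq_zero fun _ _ => by ring

theorem symp_map {S : Type*} [CommRing S] (f : R →+* S) (x y : Fin (2 * g) → R) :
    symp (fun j => f (x j)) (fun j => f (y j)) = f (symp x y) := by
  simp [symp, map_sum]

theorem symp_stdB (v : Fin (2 * g) → R) {i : ℕ} (hi : i < g) :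
    symp v (stdB R g i) = v ⟨2 * i, by omega⟩ := by
  rw [symp, Finset.sum_eq_single ⟨i, hi⟩]
  · simp [stdB]
  · intro k _ hk
    have h1 : (k : ℕ) ≠ i := fun h => hk (Fin.ext h)
    have h2 : 2 * (k : ℕ) ≠ 2 * i + 1 := by omega
    simp [stdB, h1, h2]
  · simp

theorem symp_stdA (v : Fin (2 * g) → R) {i : ℕ} (hi : i < g) :
    symp v (stdA R g i) = -v ⟨2 * i + 1, by omega⟩ := by
  rw [symp, Finset.sum_eq_single ⟨i, hi⟩]
  · simp [stdA]
  · intro k _ hk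
    have h1 : (k : ℕ) ≠ i := fun h => hk (Fin.ext h)
    have h2 : 2 * (k : ℕ) + 1 ≠ 2 * i := by omega
    simp [stdA, h1, h2]
  · simp

theorem mem_perp {A : Set (Fin (2 * g) → R)} {x : Fin (2 * g) → R} :
    x ∈ perp A ↔ ∀ a ∈ A, symp x a = 0 := Iff.rfl

theorem perp_anti {A B : Set (Fin (2 * g) → R)} (h : A ⊆ B) : perp B ≤ perp A :=
  fun _ hx a ha => hx a (h ha)

end Symp

theorem sympForm_nondegenerate {F : Type*} [Field F] {g : ℕ} :
    (sympForm : LinearMap.BilinForm F (Fin (2 * g) → F)).Nondegenerate := by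
  have hleft : ∀ v : Fin (2 * g) → F, (∀ w, symp v w = 0) → v = 0 := by
    intro v hv
    funext ⟨j, hj⟩
    obtain ⟨i, rfl | rfl⟩ := Nat.even_or_odd' j
    · simpa [symp_stdB v (i := i) (by omega)] using hv (stdB F g i)
    · simpa [symp_stdA v (i := i) (by omega)] using hv (stdA F g i)
  exact ⟨hleft, fun v hv => hleft v fun w => by rw [symp_anticomm, neg_eq_zero]; exact hv w⟩

theorem card_le_of_linearIndependent_of_isotropic {F : Type*} [Field F] {g : ℕ} {ι : Type*}
    [Fintype ι] {v : ι → Fin (2 * g) → F} (hli : LinearIndependent F v)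
    (hiso : ∀ i j, symp (v i) (v j) = 0) : Fintype.card ι ≤ g := by
  set W := Submodule.span F (Set.range v)
  have hle : W ≤ (sympForm : LinearMap.BilinForm F _).orthogonal W := by
    refine Submodule.span_le.mpr (Set.range_subset_iff.mpr fun j x hx => ?_)
    have : W ≤ LinearMap.ker (sympForm.flip (v j)) :=
      Submodule.span_le.mpr (Set.range_subset_iff.mpr fun i => hiso i j)
    exact this hx
  have := Submodule.finrank_mono hle
  rw [LinearMap.BilinForm.finrank_orthogonal sympForm_nondegenerate,
    Module.finrank_fin_fun, finrank_span_eq_card hli] at this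
  omega

section DualFamily

variable (R : Type*) {M : Type*} [CommRing R] [AddCommGroup M] [Module R M]
  {ι κ : Type*} [DecidableEq ι] [DecidableEq κ]

def HasDualFamily (v : ι → M) : Prop :=
  ∃ φ : ι → Module.Dual R M, ∀ i j, φ i (v j) = if i = j then 1 else 0

variable {R}

theorem HasDualFamily.linearIndependent {v : ι → M} (hv : HasDualFamily R v) :
    LinearIndependent R v := by
  obtain ⟨φ, hφ⟩ := hv
  rw [linearIndependent_iff']
  intro s c hc i hi
  simpa [map_sum, hφ, Finset.sum_ite_eq, hi] using congrArg (φ i) hc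

theorem HasDualFamily.comp_equiv {v : ι → M} (hv : HasDualFamily R v) (σ : κ ≃ ι) :
    HasDualFamily R (v ∘ σ) := by
  obtain ⟨φ, hφ⟩ := hv
  exact ⟨φ ∘ σ, fun i j => by simp [hφ]⟩

theorem HasDualFamily.sumElim [Fintype κ] {v : ι → M} {x : κ → M} (hv : HasDualFamily R v)
    (ψ : κ → Module.Dual R M) (hψv : ∀ k i, ψ k (v i) = 0)
    (hψx : ∀ k l, ψ k (x l) = if k = l then 1 else 0) :
    HasDualFamily R (Sum.elim v x) := by
  obtain ⟨φ, hφ⟩ := hv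
  refine ⟨Sum.elim (fun i => φ i - ∑ k, φ i (x k) • ψ k) ψ, ?_⟩
  rintro (i | k) (j | l) <;> simp [hφ, hψv, hψx, Finset.sum_ite_eq']

theorem hasDualFamily_of_isCompl {v : ι → M} (hli : LinearIndependent R v) {C : Submodule R M}
    (hC : IsCompl (Submodule.span R (Set.range v)) C) : HasDualFamily R v := by
  let b := Module.Basis.span hli
  refine ⟨fun i => (b.coord i).comp (Submodule.projectionOnto _ C hC), fun i j => ?_⟩
  have hvj : v j ∈ Submodule.span R (Set.range v) := Submodule.subset_span ⟨j, rfl⟩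
  have : Submodule.projectionOnto _ C hC (v j) = b j := by
    rw [Submodule.projectionOnto_apply_left hC ⟨v j, hvj⟩]
    exact (Module.Basis.span_apply hli j).symm
  simp [this, Finsupp.single_apply, eq_comm]

end DualFamily

section Unimodular

variable {n m k : ℕ}

theorem HasDualFamily.isUnimodular {v : Fin m → Fin n → ℤ} (hv : HasDualFamily ℤ v) :
    IsUnimodular v := by
  obtain ⟨φ, hφ⟩ := hv
  refine ⟨HasDualFamily.linearIndependent ⟨φ, hφ⟩, ⨅ i, LinearMap.ker (φ i), ?_, ?_⟩
  · rw [Submodule.disjoint_def]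
    intro x hx hker
    obtain ⟨c, rfl⟩ := (Submodule.mem_span_range_iff_exists_fun ℤ).mp hx
    have hc : ∀ i, c i = 0 := fun i => by
      have := LinearMap.mem_ker.mp ((Submodule.mem_iInf _).mp hker i)
      simpa only [map_sum, LinearMap.map_smul, hφ, smul_eq_mul, mul_ite, mul_one, mul_zero,
        Finset.sum_ite_eq, Finset.mem_univ, if_true] using this
    simp [hc]
  · rw [codisjoint_iff_le_sup]
    intro x _
    have hker : x - ∑ i, φ i x • v i ∈ ⨅ i, LinearMap.ker (φ i) :=
      (Submodule.mem_iInf _).mpr fun i => by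
        simp only [LinearMap.mem_ker, map_sub, map_sum, LinearMap.map_smul, hφ, smul_eq_mul,
          mul_ite, mul_one, mul_zero, Finset.sum_ite_eq, Finset.mem_univ, if_true, sub_self]
    have hspan : ∑ i, φ i x • v i ∈ Submodule.span ℤ (Set.range v) :=
      Submodule.sum_mem _ fun i _ => Submodule.smul_mem _ _ (Submodule.subset_span ⟨i, rfl⟩)
    simpa using Submodule.add_mem_sup hspan hker

theorem isUnimodular_iff_hasDualFamily {v : Fin m → Fin n → ℤ} :
    IsUnimodular v ↔ HasDualFamily ℤ v :=
  ⟨fun ⟨hli, _, hC⟩ => hasDualFamily_of_isCompl hli hC, HasDualFamily.isUnimodular⟩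

theorem primitive_of_apply_eq_one {v : Fin n → ℤ} (φ : Module.Dual ℤ (Fin n → ℤ))
    (hφ : φ v = 1) : Primitive v :=
  HasDualFamily.isUnimodular ⟨fun _ => φ, by simp [Fin.forall_fin_one, hφ]⟩

theorem fin_append_eq_sumElim_comp {α : Type*} (v : Fin m → α) (x : Fin k → α) :
    Fin.append v x = Sum.elim v x ∘ finSumFinEquiv.symm := by
  ext i
  refine Fin.addCases (fun i => ?_) (fun i => ?_) i <;> simp

theorem IsUnimodular.append {v : Fin m → Fin n → ℤ} {x : Fin k → Fin n → ℤ} (hv : IsUnimodular v)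
    (ψ : Fin k → Module.Dual ℤ (Fin n → ℤ)) (hψv : ∀ j i, ψ j (v i) = 0)
    (hψx : ∀ j l, ψ j (x l) = if j = l then 1 else 0) :
    IsUnimodular (Fin.append v x) := by
  rw [isUnimodular_iff_hasDualFamily] at hv ⊢
  rw [fin_append_eq_sumElim_comp]
  exact (hv.sumElim ψ hψv hψx).comp_equiv _

end Unimodular

section IntegerValues

variable {M : Type*} [AddCommGroup M] [Module ℤ M]

theorem dvd_of_forall_pos_le (φ : M →ₗ[ℤ] ℤ) {y₀ : M} {d : ℤ} (hy₀ : φ y₀ = d) (hd : 0 < d)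
    (hmin : ∀ x, 0 < φ x → d ≤ φ x) (x : M) : d ∣ φ x := by
  have hrem : φ (x - (φ x / d) • y₀) = φ x % d := by
    rw [map_sub, map_zsmul, hy₀, smul_eq_mul, Int.emod_def, mul_comm]
  refine Int.dvd_of_emod_eq_zero (by_contra fun hne => ?_)
  have hle := hmin _ (hrem ▸ lt_of_le_of_ne (Int.emod_nonneg _ hd.ne') (Ne.symm hne))
  rw [hrem] at hle
  exact absurd (Int.emod_lt_of_pos _ hd) (not_lt.mpr hle)

theorem exists_bilinForm_eq_one_of_forall_prime (B : LinearMap.BilinForm ℤ M)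
    (h : ∀ q : ℕ, q.Prime → ∃ x y, ¬ (q : ℤ) ∣ B x y) : ∃ x y, B x y = 1 := by
  classical
  have hex : ∃ n : ℕ, 0 < n ∧ ∃ x y, B x y = n := by
    obtain ⟨x, y, hxy⟩ := h 2 Nat.prime_two
    rcases Ne.lt_or_gt (fun h0 => hxy (h0 ▸ dvd_zero _) : B x y ≠ 0) with hlt | hgt
    · exact ⟨(B x (-y)).toNat, by simp; omega, x, -y, by simp; omega⟩
    · exact ⟨(B x y).toNat, by omega, x, y, by omega⟩
  obtain ⟨hpos, x₀, y₀, hd⟩ := Nat.find_spec hex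
  set d := Nat.find hex
  have hmin : ∀ x y, 0 < B x y → (d : ℤ) ≤ B x y := fun x y hxy => by
    have := Nat.find_min' hex ⟨by omega, x, y, (Int.toNat_of_nonneg hxy.le).symm⟩
    omega
  have hdvd_left : ∀ x, (d : ℤ) ∣ B x y₀ :=
    dvd_of_forall_pos_le (B.flip y₀) hd (by omega) fun x => hmin x y₀
  have hdvd_right : ∀ y, (d : ℤ) ∣ B x₀ y :=
    dvd_of_forall_pos_le (B x₀) hd (by omega) (hmin x₀)
  -- If `B x y₀ = d * α`, then `x + (1 - α) • x₀` pairs with `y₀` to exactly `d`.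
  have hdvd : ∀ x y, (d : ℤ) ∣ B x y := by
    intro x y
    obtain ⟨α, hα⟩ := hdvd_left x
    have hx' : B (x + (1 - α) • x₀) y₀ = d := by simp [hα, hd]; ring
    have h' := dvd_of_forall_pos_le _ hx' (by omega) (hmin _) y
    simp only [map_add, map_zsmul, LinearMap.add_apply, LinearMap.smul_apply, smul_eq_mul] at h'
    simpa using (dvd_add_left (dvd_mul_of_dvd_right (hdvd_right y) _)).mp h'
  have hd1 : d = 1 := by
    by_contra hne
    obtain ⟨q, hq, hqd⟩ := Nat.exists_prime_and_dvd hne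
    obtain ⟨x, y, hxy⟩ := h q hq
    exact hxy ((Int.natCast_dvd_natCast.mpr hqd).trans (hdvd x y))
  exact ⟨x₀, y₀, by rw [hd, hd1, Nat.cast_one]⟩

end IntegerValues

section Frame

variable {R : Type*} [CommRing R] {g : ℕ} {κ κ' : Type*} [DecidableEq κ] [DecidableEq κ']

structure IsSymplecticFrame (e f : κ → Fin (2 * g) → R) : Prop where
  symp_e : ∀ k l, symp (e k) (e l) = 0
  symp_f : ∀ k l, symp (f k) (f l) = 0
  symp_e_f : ∀ k l, symp (e k) (f l) = if k = l then 1 else 0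

theorem IsSymplecticFrame.sumElim {e f : κ → Fin (2 * g) → R} {e' f' : κ' → Fin (2 * g) → R}
    (h : IsSymplecticFrame e f) (h' : IsSymplecticFrame e' f')
    (he' : ∀ l, e' l ∈ perp (Set.range e ∪ Set.range f))
    (hf' : ∀ l, f' l ∈ perp (Set.range e ∪ Set.range f)) :
    IsSymplecticFrame (Sum.elim e e') (Sum.elim f f') := by
  have he'e : ∀ l k, symp (e' l) (e k) = 0 := fun l k => he' l _ (Or.inl ⟨k, rfl⟩)
  have he'f : ∀ l k, symp (e' l) (f k) = 0 := fun l k => he' l _ (Or.inr ⟨k, rfl⟩)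
  have hf'e : ∀ l k, symp (f' l) (e k) = 0 := fun l k => hf' l _ (Or.inl ⟨k, rfl⟩)
  have hf'f : ∀ l k, symp (f' l) (f k) = 0 := fun l k => hf' l _ (Or.inr ⟨k, rfl⟩)
  constructor <;> rintro (k | k) (l | l) <;>
    simp [h.symp_e, h.symp_f, h.symp_e_f, h'.symp_e, h'.symp_f, h'.symp_e_f, he'e, he'f, hf'f,
      symp_eq_zero_comm.mp (he'e _ _), symp_eq_zero_comm.mp (hf'e _ _),
      symp_eq_zero_comm.mp (hf'f _ _)]

theorem IsSymplecticFrame.cons {n : ℕ} {e f : Fin n → Fin (2 * g) → R}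
    (h : IsSymplecticFrame e f) {p p' : Fin (2 * g) → R}
    (hp : p ∈ perp (Set.range e ∪ Set.range f)) (hp' : p' ∈ perp (Set.range e ∪ Set.range f))
    (hpp' : symp p p' = 1) :
    IsSymplecticFrame (Fin.cons p e : Fin (n + 1) → _) (Fin.cons p' f) := by
  have hpe : ∀ k, symp p (e k) = 0 := fun k => hp _ (Or.inl ⟨k, rfl⟩)
  have hpf : ∀ k, symp p (f k) = 0 := fun k => hp _ (Or.inr ⟨k, rfl⟩)
  have hp'e : ∀ k, symp p' (e k) = 0 := fun k => hp' _ (Or.inl ⟨k, rfl⟩)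
  have hp'f : ∀ k, symp p' (f k) = 0 := fun k => hp' _ (Or.inr ⟨k, rfl⟩)
  constructor <;> intro k l <;> cases k using Fin.cases <;> cases l using Fin.cases <;>
    simp [h.symp_e, h.symp_f, h.symp_e_f, hpe, hpf, hp'f, hpp', symp_self,
      symp_eq_zero_comm.mp (hpe _), symp_eq_zero_comm.mp (hp'e _), symp_eq_zero_comm.mp (hp'f _),
      (Fin.succ_ne_zero _).symm]

theorem isSymplecticFrame_first_pair :
    IsSymplecticFrame (fun _ : Unit => stdA R (g + 1) 0) (fun _ => stdB R (g + 1) 0) :=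
  ⟨fun _ _ => symp_self _, fun _ _ => symp_self _,
    fun _ _ => by simp [symp_stdB _ (Nat.succ_pos g), stdA]⟩

end Frame

section Lattice

variable {n N : ℕ}

theorem linearIndependent_intCast_of_saturated {ι : Type*} [Fintype ι] {q : ℕ} [Fact q.Prime]
    {K : Submodule ℤ (Fin n → ℤ)} (hK : ∀ v, (q : ℤ) • v ∈ K → v ∈ K) (b : Module.Basis ι ℤ K) :
    LinearIndependent (ZMod q) (fun i j => ((b i : Fin n → ℤ) j : ZMod q)) := by
  rw [Fintype.linearIndependent_iff]
  intro f hf i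
  set c : ι → ℤ := fun i => (f i).val
  have hc : ∀ i, ((c i : ℤ) : ZMod q) = f i := fun i => by simp [c]
  set X : K := b.equivFun.symm c with hX
  have hXq : ∀ j, (q : ℤ) ∣ (X : Fin n → ℤ) j := by
    intro j
    rw [← ZMod.intCast_zmod_eq_zero_iff_dvd]
    have := congrFun hf j
    simp only [Finset.sum_apply, Pi.smul_apply, smul_eq_mul, Pi.zero_apply] at this
    simpa [hX, Module.Basis.equivFun_symm_apply, Submodule.coe_sum, Finset.sum_apply, hc] using this
  set u : Fin n → ℤ := fun j => (X : Fin n → ℤ) j / q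
  have hu : (q : ℤ) • u = X := funext fun j => Int.mul_ediv_cancel' (hXq j)
  have huK : u ∈ K := hK u (hu ▸ X.2)
  have hXu : X = (q : ℤ) • ⟨u, huK⟩ := Subtype.ext hu.symm
  have hrepr : c i = q * b.repr ⟨u, huK⟩ i := by
    have h1 : b.repr X i = c i := by
      rw [hX, ← b.equivFun_apply, LinearEquiv.apply_symm_apply]
    rw [← h1, hXu, LinearEquiv.map_smul, Finsupp.smul_apply, smul_eq_mul]
  rw [← hc, hrepr]
  simp

theorem mem_perp_of_smul_mem {A : Set (Fin (2 * N) → ℤ)} {c : ℤ} (hc : c ≠ 0)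
    {v : Fin (2 * N) → ℤ} (hv : c • v ∈ perp A) : v ∈ perp A := fun a ha =>
  (mul_eq_zero.mp (symp_smul_left c v a ▸ hv a ha)).resolve_left hc

theorem le_finrank_perp_add_card {ι : Type*} [Fintype ι] (D : ι → Fin (2 * N) → ℤ) :
    2 * N ≤ Module.finrank ℤ (perp (Set.range D)) + Fintype.card ι := by
  let Ψ : (Fin (2 * N) → ℤ) →ₗ[ℤ] (ι → ℤ) := LinearMap.pi fun i => sympForm.flip (D i)
  have hker : LinearMap.ker Ψ = perp (Set.range D) := by
    ext v
    simp only [LinearMap.mem_ker, Ψ, LinearMap.pi_apply, funext_iff, Pi.zero_apply, mem_perp,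
      Set.forall_mem_range]
    exact Iff.rfl
  have hrank := (LinearMap.ker Ψ).finrank_quotient_add_finrank
  rw [Ψ.quotKerEquivRange.finrank_eq, Module.finrank_fin_fun, hker] at hrank
  have hrange := Submodule.finrank_le (LinearMap.range Ψ)
  rw [Module.finrank_fintype_fun_eq_card] at hrange
  omega

theorem finrank_perp_add_card_le {A : Set (Fin (2 * N) → ℤ)} {κ : Type*} [Fintype κ]
    [DecidableEq κ] {e f : κ → Fin (2 * N) → ℤ} (hef : IsSymplecticFrame e f)
    (heA : ∀ k, e k ∈ A) (hfA : ∀ k, f k ∈ A) (q : ℕ) [Fact q.Prime]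
    (hq : ∀ x ∈ perp A, ∀ y ∈ perp A, (q : ℤ) ∣ symp x y) :
    Module.finrank ℤ (perp A) + Fintype.card κ ≤ N := by
  let b := Module.finBasis ℤ (perp A)
  let red : (Fin (2 * N) → ℤ) → Fin (2 * N) → ZMod q := fun v j => (v j : ZMod q)
  have hred : ∀ x y, symp (red x) (red y) = ((symp x y : ℤ) : ZMod q) := fun x y => by
    simpa using symp_map (Int.castRingHom (ZMod q)) x y
  have hb : ∀ i, (b i : Fin (2 * N) → ℤ) ∈ perp A := fun i => (b i).2
  have hli : LinearIndependent (ZMod q) fun i => red (b i) :=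
    linearIndependent_intCast_of_saturated
      (fun v hv => mem_perp_of_smul_mem (by exact_mod_cast (Fact.out : q.Prime).ne_zero) hv) b
  obtain ⟨C, hC⟩ :=
    Submodule.exists_isCompl (Submodule.span (ZMod q) (Set.range fun i => red (b i)))
  have hdual : HasDualFamily (ZMod q) (Sum.elim (fun i => red (b i)) fun k => red (e k)) := by
    refine (hasDualFamily_of_isCompl hli hC).sumElim (fun k => sympForm.flip (red (f k)))
      (fun k i => ?_) (fun k l => ?_)
    · simp [hred, hb i _ (hfA k)]
    · simp [hred, hef.symp_e_f, eq_comm]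
  have hiso : ∀ i j, symp (Sum.elim (fun i => red (b i)) (fun k => red (e k)) i)
      (Sum.elim (fun i => red (b i)) (fun k => red (e k)) j) = 0 := by
    rintro (i | k) (j | l)
    · simpa [hred, ZMod.intCast_zmod_eq_zero_iff_dvd] using hq _ (hb i) _ (hb j)
    · simp [hred, hb i _ (heA l)]
    · simp [hred, symp_anticomm _ (e k), hb j _ (heA k)]
    · simp [hred, hef.symp_e]
  simpa using card_le_of_linearIndependent_of_isotropic hdual.linearIndependent hiso

end Lattice

section HyperbolicPairs

variable {N : ℕ} {ι κ : Type*} [Fintype ι] [Fintype κ] [DecidableEq κ]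

theorem exists_symp_eq_one_of_perp (c : ι → Fin (2 * N) → ℤ) {e f : κ → Fin (2 * N) → ℤ}
    (hef : IsSymplecticFrame e f) (hcard : Fintype.card ι + Fintype.card κ < N) :
    ∃ p ∈ perp (Set.range c ∪ Set.range e ∪ Set.range f),
      ∃ p' ∈ perp (Set.range c ∪ Set.range e ∪ Set.range f), symp p p' = 1 := by
  have hrank := le_finrank_perp_add_card (Sum.elim c (Sum.elim e f))
  rw [Set.Sum.elim_range, Set.Sum.elim_range, ← Set.union_assoc, Fintype.card_sum,
    Fintype.card_sum] at hrank
  set A := Set.range c ∪ Set.range e ∪ Set.range f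
  have hprime : ∀ q : ℕ, q.Prime →
      ∃ x y, ¬ (q : ℤ) ∣ (sympForm : LinearMap.BilinForm ℤ _).restrict (perp A) x y := by
    intro q hq
    have := Fact.mk hq
    by_contra! hdvd
    have := finrank_perp_add_card_le hef (fun k => Or.inl (Or.inr ⟨k, rfl⟩))
      (fun k => Or.inr ⟨k, rfl⟩) q fun x hx y hy => hdvd ⟨x, hx⟩ ⟨y, hy⟩
    omega
  obtain ⟨x, y, hxy⟩ := exists_bilinForm_eq_one_of_forall_prime _ hprime
  exact ⟨x, x.2, y, y.2, hxy⟩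

theorem exists_isSymplecticFrame_perp (c : ι → Fin (2 * N) → ℤ) {e f : κ → Fin (2 * N) → ℤ}
    (hef : IsSymplecticFrame e f) (t : ℕ) (ht : Fintype.card ι + Fintype.card κ + t ≤ N) :
    ∃ e' f' : Fin t → Fin (2 * N) → ℤ, IsSymplecticFrame e' f' ∧
      ∀ k, e' k ∈ perp (Set.range c ∪ Set.range e ∪ Set.range f) ∧
        f' k ∈ perp (Set.range c ∪ Set.range e ∪ Set.range f) := by
  induction t with
  | zero => exact ⟨Fin.elim0, Fin.elim0, ⟨nofun, nofun, nofun⟩, nofun⟩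
  | succ t ih =>
    obtain ⟨e', f', hframe, hperp⟩ := ih (by omega)
    have hsub : Set.range e ∪ Set.range f ⊆ Set.range c ∪ Set.range e ∪ Set.range f :=
      Set.union_assoc _ _ _ ▸ Set.subset_union_right
    have hbig := hef.sumElim hframe (fun l => perp_anti hsub (hperp l).1)
      (fun l => perp_anti hsub (hperp l).2)
    obtain ⟨p, hp, p', hp', hpp'⟩ := exists_symp_eq_one_of_perp c hbig
      (by rw [Fintype.card_sum, Fintype.card_fin]; omega)
    have hsub₁ : Set.range e' ∪ Set.range f' ⊆
        Set.range c ∪ Set.range (Sum.elim e e') ∪ Set.range (Sum.elim f f') := by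
      rw [Set.Sum.elim_range, Set.Sum.elim_range]; intro x; simp only [Set.mem_union]; tauto
    have hsub₂ : Set.range c ∪ Set.range e ∪ Set.range f ⊆
        Set.range c ∪ Set.range (Sum.elim e e') ∪ Set.range (Sum.elim f f') := by
      rw [Set.Sum.elim_range, Set.Sum.elim_range]; intro x; simp only [Set.mem_union]; tauto
    refine ⟨Fin.cons p e', Fin.cons p' f',
      hframe.cons (perp_anti hsub₁ hp) (perp_anti hsub₁ hp') hpp', fun k => ?_⟩
    cases k using Fin.cases
    · exact ⟨perp_anti hsub₂ hp, perp_anti hsub₂ hp'⟩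
    · simpa using hperp _

end HyperbolicPairs

section ProjectionH₂

variable {R : Type*} [CommRing R] {g : ℕ}

theorem mem_coordZero_two_of_symp_eq_zero {v : Fin (2 * (g + 1)) → R}
    (ha : symp v (stdA R (g + 1) 0) = 0) (hb : symp v (stdB R (g + 1) 0) = 0) :
    v ∈ coordZero R (2 * (g + 1)) 2 := by
  rw [symp_stdA _ (Nat.succ_pos g), neg_eq_zero] at ha
  rw [symp_stdB _ (Nat.succ_pos g)] at hb
  rintro ⟨j, hj⟩ (hj2 : j < 2)
  interval_cases j
  exacts [hb, ha]

theorem symp_pr2_right {v z : Fin (2 * (g + 1)) → R} (hz : z ∈ coordZero R (2 * (g + 1)) 2) :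
    symp z (pr2 v) = symp z v := by
  have h0 : z 0 = 0 := hz 0 (by simp)
  have h1 : z 1 = 0 := hz 1 (by simpa using Nat.mod_le 1 _)
  simp only [symp, Fin.sum_univ_succ]
  congr 1
  simp [pr2, h0, h1]

end ProjectionH₂

theorem exists_isSymplecticFrame_coordZero_perp {m g : ℕ} (u : Fin m → Fin (2 * (g + 1)) → ℤ)
    (t : ℕ) (ht : m + 1 + t ≤ g + 1) :
    ∃ e f : Fin t → Fin (2 * (g + 1)) → ℤ, IsSymplecticFrame e f ∧
      ∀ k, e k ∈ coordZero ℤ _ 2 ⊓ perp (Set.range u) ∧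
        f k ∈ coordZero ℤ _ 2 ⊓ perp (Set.range u) := by
  obtain ⟨e, f, hef, hperp⟩ := exists_isSymplecticFrame_perp u isSymplecticFrame_first_pair t
    (by simpa using ht)
  have hmem : ∀ v ∈ perp (Set.range u ∪ Set.range (fun _ : Unit => stdA ℤ (g + 1) 0) ∪
      Set.range (fun _ : Unit => stdB ℤ (g + 1) 0)), v ∈ coordZero ℤ _ 2 ⊓ perp (Set.range u) :=
    fun v hv => ⟨mem_coordZero_two_of_symp_eq_zero (hv _ (Or.inl (Or.inr ⟨(), rfl⟩)))
      (hv _ (Or.inr ⟨(), rfl⟩)), perp_anti (fun _ ha => Or.inl (Or.inl ha)) hv⟩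
  exact ⟨e, f, hef, fun k => ⟨hmem _ (hperp k).1, hmem _ (hperp k).2⟩⟩

theorem symp_fin_append_eq_zero {R : Type*} [CommRing R] {g m n : ℕ}
    {v : Fin m → Fin (2 * g) → R} {x : Fin n → Fin (2 * g) → R}
    (hv : ∀ i j, i ≠ j → symp (v i) (v j) = 0) (hx : ∀ k l, symp (x k) (x l) = 0)
    (hvx : ∀ i l, symp (v i) (x l) = 0) :
    ∀ i j, i ≠ j → symp (Fin.append v x i) (Fin.append v x j) = 0 := by
  intro i j hij
  cases i using Fin.addCases <;> cases j using Fin.addCases <;>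
    simp only [Fin.append_left, Fin.append_right]
  · exact hv _ _ fun h => hij (h ▸ rfl)
  · exact hvx _ _
  · exact symp_eq_zero_comm.mp (hvx _ _)
  · exact hx _ _

/-- Lemma 3.11 for `i = 2`. -/
theorem stmt14 (g s : ℕ) (hs : s + 2 ≤ g)
    (w : Fin (s + 1) → Fin (2 * (g + 1)) → ℤ)
    (horth : ∀ i j, i ≠ j → symp (w i) (w j) = 0)
    (ha1 : ∀ i, w i ⟨0, by omega⟩ = 1)
    (hgcd : IsUnimodular w) :
    ∃ x : Fin (g - 1 - s) → Fin (2 * (g + 1)) → ℤ,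
      (∀ j, x j ⟨0, by omega⟩ = 1) ∧
      (∀ j, x j ⟨1, by omega⟩ = w 0 ⟨1, by omega⟩) ∧
      (∀ j, Primitive (pr2 (x j))) ∧
      (∀ i j, i ≠ j → symp (Fin.append w x i) (Fin.append w x j) = 0) ∧
      IsUnimodular (Fin.append w x) ∧
      ∀ (r : ℕ) (idx : Fin (r + 1) → Fin (s + 1)), StrictMono idx →
        IsUnimodular (fun i => pr2 (w (idx i))) →
        IsUnimodular (Fin.append (fun i => pr2 (w (idx i))) fun j => pr2 (x j)) := by
  obtain ⟨z, y, hframe, hzy⟩ := exists_isSymplecticFrame_coordZero_perp w (g - 1 - s) (by omega)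
  have hzw : ∀ k i, symp (z k) (w i) = 0 := fun k i => (hzy k).1.2 _ ⟨i, rfl⟩
  have hwy : ∀ i l, symp (w i) (y l) = 0 := fun i l => symp_eq_zero_comm.mp ((hzy l).2.2 _ ⟨i, rfl⟩)
  have hww : ∀ i, symp (w i) (w 0) = 0 := fun i =>
    (eq_or_ne i 0).elim (fun hi => hi ▸ symp_self _) (horth i 0)
  have hzx : ∀ k l, symp (z k) (w 0 + y l) = if k = l then 1 else 0 := fun k l => by
    rw [symp_add_right, hzw, hframe.symp_e_f, zero_add]
  refine ⟨fun l => w 0 + y l, fun l => ?_, fun l => ?_, fun l => ?_, ?_, ?_, ?_⟩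
  · show (w 0 + y l) _ = 1
    rw [Pi.add_apply, ha1, (hzy l).2.1 _ (by norm_num), add_zero]
  · show (w 0 + y l) _ = _
    rw [Pi.add_apply, (hzy l).2.1 _ (by norm_num), add_zero]
  · refine primitive_of_apply_eq_one (sympForm (z l)) ?_
    simp [symp_pr2_right (hzy l).1.1, hzx]
  · refine symp_fin_append_eq_zero horth (fun k l => ?_) fun i l => ?_
    · simp [symp_add_left, symp_add_right, symp_self, hwy, symp_eq_zero_comm.mp (hwy 0 _),
        hframe.symp_f]
    · rw [symp_add_right, hww, hwy, add_zero]
  · exact hgcd.append (fun k => sympForm (z k)) (by simpa using hzw) (by simpa using hzx)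
  · intro r idx _ huni
    refine huni.append (fun k => sympForm (z k)) (fun k i => ?_) fun k l => ?_
    · simpa [symp_pr2_right (hzy k).1.1] using hzw k (idx i)
    · simpa [symp_pr2_right (hzy k).1.1] using hzx k l

end Paper
end

section
/- For any vectors v_1, …, v_m, w_1, …, w_n ∈ ℤ^N, the product gcd(v_1,…,v_m) · gcd(w_1,…,w_n) divides gcd(v_1,…,v_m,w_1,…,w_n), with the convention that every natural number divides 0. -/
/-!
Fix the rows `r` of a maximal minor of `[v | w]`. That minor is alternating in the columns `w`,
so it factors through `⋀ⁿ ℤ^N`; expanding `w₁ ∧ ⋯ ∧ wₙ` in the standard basis writes it as a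
ℤ-combination of the maximal minors of `w`, with coefficients the minors of `[v | e_s]` for
standard basis vectors `e_s`. Each coefficient is alternating in the columns `v`, so the same
expansion makes it a multiple of `gcd(v)`.
-/

theorem Fin.append_update_left {α : Type*} {m n : ℕ} [DecidableEq (Fin m)]
    [DecidableEq (Fin (m + n))] (x : Fin m → α) (u : Fin n → α) (i : Fin m) (a : α) :
    Fin.append (Function.update x i a) u
      = Function.update (Fin.append x u) (Fin.castAdd n i) a := by
  funext k
  refine Fin.addCases (fun k => ?_) (fun k => ?_) k
  · simp [Function.update_apply]
  · simp only [Fin.append_right, Function.update_apply, Fin.ext_iff, Fin.val_natAdd,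
      Fin.val_castAdd, right_eq_ite_iff]
    omega

theorem Fin.append_update_right {α : Type*} {m n : ℕ} [DecidableEq (Fin n)]
    [DecidableEq (Fin (m + n))] (x : Fin m → α) (u : Fin n → α) (i : Fin n) (a : α) :
    Fin.append x (Function.update u i a)
      = Function.update (Fin.append x u) (Fin.natAdd m i) a := by
  funext k
  refine Fin.addCases (fun k => ?_) (fun k => ?_) k
  · simp only [Fin.append_left, Function.update_apply, Fin.ext_iff, Fin.val_castAdd,
      Fin.val_natAdd, right_eq_ite_iff]
    omega
  · simp [Function.update_apply]

namespace AlternatingMap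

variable {R M N : Type*} [CommSemiring R] [AddCommMonoid M] [Module R M] [AddCommMonoid N]
  [Module R N] {m n : ℕ}

def curryAppendLeft (g : M [⋀^Fin (m + n)]→ₗ[R] N) (x : Fin m → M) : M [⋀^Fin n]→ₗ[R] N where
  toFun u := g (Fin.append x u)
  map_update_add' u i a b := by simp only [Fin.append_update_right, map_update_add]
  map_update_smul' u i c a := by simp only [Fin.append_update_right, map_update_smul]
  map_eq_zero_of_eq' u i j h hij :=
    g.map_eq_zero_of_eq (i := Fin.natAdd m i) (j := Fin.natAdd m j) _ (by simpa using h)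
      ((Fin.natAdd_injective _ _).ne hij)

def curryAppendRight (g : M [⋀^Fin (m + n)]→ₗ[R] N) (u : Fin n → M) : M [⋀^Fin m]→ₗ[R] N where
  toFun x := g (Fin.append x u)
  map_update_add' x i a b := by simp only [Fin.append_update_left, map_update_add]
  map_update_smul' x i c a := by simp only [Fin.append_update_left, map_update_smul]
  map_eq_zero_of_eq' x i j h hij :=
    g.map_eq_zero_of_eq (i := Fin.castAdd n i) (j := Fin.castAdd n j) _ (by simpa using h)
      ((Fin.castAdd_injective _ _).ne hij)

@[simp]
theorem curryAppendLeft_apply (g : M [⋀^Fin (m + n)]→ₗ[R] N) (x : Fin m → M) (u : Fin n → M) :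
    g.curryAppendLeft x u = g (Fin.append x u) := rfl

@[simp]
theorem curryAppendRight_apply (g : M [⋀^Fin (m + n)]→ₗ[R] N) (x : Fin m → M) (u : Fin n → M) :
    g.curryAppendRight u x = g (Fin.append x u) := rfl

end AlternatingMap

theorem Matrix.det_of_comp_eq_detRowAlternating_funLeft {R ι : Type*} [CommRing R] {k : ℕ}
    (u : Fin k → ι → R) (r : Fin k → ι) :
    (Matrix.of fun i j => u j (r i)).det
      = Matrix.detRowAlternating.compLinearMap (LinearMap.funLeft R R r) u := by
  rw [← Matrix.det_transpose]
  rfl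

namespace Paper

section

variable {ι : Type*} [Fintype ι] {m n : ℕ}

theorem vgcd_dvd_det (w : Fin n → ι → ℤ) (r : Fin n → ι) :
    (vgcd w : ℤ) ∣ (Matrix.of fun i j => w j (r i)).det :=
  Int.natCast_dvd.mpr (Finset.gcd_dvd (Finset.mem_univ r))

open exteriorPower in
theorem vgcd_mul_dvd_alternatingMap [LinearOrder ι] (f : (ι → ℤ) [⋀^Fin n]→ₗ[ℤ] ℤ) (d : ℤ)
    (hd : ∀ s : Fin n → ι, d ∣ f fun j => Pi.single (s j) 1) (w : Fin n → ι → ℤ) :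
    (vgcd w : ℤ) * d ∣ f w := by
  set B := (Pi.basisFun ℤ ι).exteriorPower n
  rw [← alternatingMapLinearEquiv_apply_ιMulti, ← B.sum_repr (ιMulti ℤ n w), map_sum]
  refine Finset.dvd_sum fun s _ => ?_
  rw [map_smul, smul_eq_mul]
  refine mul_dvd_mul ?_ ?_
  · rw [basis_repr_apply, ιMultiDual_apply_ιMulti, ← Matrix.det_transpose]
    exact vgcd_dvd_det w _
  · rw [basis_apply, ιMulti_family, alternatingMapLinearEquiv_apply_ιMulti]
    simpa [Function.comp_def] using hd _

theorem vgcd_mul_vgcd_dvd_alternatingMap_append [LinearOrder ι]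
    (g : (ι → ℤ) [⋀^Fin (m + n)]→ₗ[ℤ] ℤ) (v : Fin m → ι → ℤ) (w : Fin n → ι → ℤ) :
    (vgcd v * vgcd w : ℤ) ∣ g (Fin.append v w) := by
  rw [mul_comm]
  refine vgcd_mul_dvd_alternatingMap (g.curryAppendLeft v) _ (fun s => ?_) w
  simpa using vgcd_mul_dvd_alternatingMap (g.curryAppendRight _) 1 (by simp) v

end

/-- `gcd(v) · gcd(w)` divides `gcd(v, w)`. -/
theorem stmt19 (N m n : ℕ) (v : Fin m → Fin N → ℤ) (w : Fin n → Fin N → ℤ) :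
    vgcd v * vgcd w ∣ vgcd (Fin.append v w) := by
  refine Finset.dvd_gcd fun r _ => Int.natCast_dvd.mp ?_
  rw [Matrix.det_of_comp_eq_detRowAlternating_funLeft, Nat.cast_mul]
  exact vgcd_mul_vgcd_dvd_alternatingMap_append _ v w

end Paper
end
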